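/- arXiv:1702.01258 — 3 statements merged into one kernel-verified Lean document; each statement's English description precedes it below -/
import Mathlib

section
/- Let Ω ⊂ ℝᵈ be a bounded convex open set with torsion function u such that √u is concave on Ω. Then ∫_Ω √u dx ≥ √(M(Ω)) |Ω| / (d+1), and consequently T(Ω)/(M(Ω)|Ω|) ≥ 1/(d+1)². -/
/-!
By concavity, `√u` dominates the cone over `Ω` with apex `(x₀, √M)`: the homothety of ratio
`1 - t/√M` centred at `x₀` maps `Ω` into the superlevel set `{√u ≥ t}`, whose measure is therefore
at least `(1 - t/√M)^d |Ω|`. Integrating this over `t ∈ (0, √M]` (layer cake) gives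
`∫_Ω √u ≥ √M |Ω| / (d+1)`, and Cauchy–Schwarz `(∫_Ω √u)² ≤ |Ω| ∫_Ω u` gives the bound on `T`.
-/

open MeasureTheory

/-- The Laplacian of a function on `EuclideanSpace ℝ (Fin d)`. -/
noncomputable def lap {d : ℕ} (f : EuclideanSpace ℝ (Fin d) → ℝ)
    (x : EuclideanSpace ℝ (Fin d)) : ℝ :=
  ∑ i, fderiv ℝ (fun y => fderiv ℝ f y (EuclideanSpace.single i 1)) x (EuclideanSpace.single i 1)

open Set Module

section Concave

variable {E : Type*} [AddCommGroup E] [Module ℝ E] {s : Set E} {f : E → ℝ} {x₀ : E}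

theorem ConcaveOn.homothety_image_subset (hf : ConcaveOn ℝ s f) (hf0 : ∀ x ∈ s, 0 ≤ f x)
    (hx₀ : x₀ ∈ s) {r : ℝ} (hr0 : 0 ≤ r) (hr1 : r ≤ 1) :
    AffineMap.homothety x₀ r '' s ⊆ {x ∈ s | (1 - r) * f x₀ ≤ f x} := by
  rintro _ ⟨y, hy, rfl⟩
  rw [AffineMap.homothety_eq_lineMap, AffineMap.lineMap_apply_module]
  refine ⟨hf.1 hx₀ hy (sub_nonneg.2 hr1) hr0 (sub_add_cancel 1 r), ?_⟩
  have hcomb := hf.2 hx₀ hy (sub_nonneg.2 hr1) hr0 (sub_add_cancel 1 r)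
  simp only [smul_eq_mul] at hcomb
  nlinarith [hf0 y hy]

end Concave

theorem integral_one_sub_div_pow (c : ℝ) (n : ℕ) :
    ∫ t in (0 : ℝ)..c, (1 - t / c) ^ n = c / (n + 1) := by
  rcases eq_or_ne c 0 with rfl | hc
  · simp
  rw [intervalIntegral.integral_comp_div (fun t => (1 - t) ^ n) hc,
    intervalIntegral.integral_comp_sub_left (fun t => t ^ n), integral_pow]
  simp [div_self hc]
  ring

section Haar

variable {E : Type*} [NormedAddCommGroup E] [NormedSpace ℝ E] [FiniteDimensional ℝ E]
  [MeasurableSpace E] [BorelSpace E] (μ : Measure E) [μ.IsAddHaarMeasure]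
  {s : Set E} {f : E → ℝ} {x₀ : E}

theorem ConcaveOn.pow_mul_measure_le_measure_superlevel (hf : ConcaveOn ℝ s f)
    (hf0 : ∀ x ∈ s, 0 ≤ f x) (hx₀ : x₀ ∈ s) {t : ℝ} (ht0 : 0 < t) (ht : t ≤ f x₀) :
    ENNReal.ofReal ((1 - t / f x₀) ^ finrank ℝ E) * μ s ≤ μ {x ∈ s | t ≤ f x} := by
  have hc : 0 < f x₀ := ht0.trans_le ht
  have hr0 : 0 ≤ 1 - t / f x₀ := sub_nonneg.2 (div_le_one_of_le₀ ht hc.le)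
  have hr1 : 1 - t / f x₀ ≤ 1 := sub_le_self _ (div_pos ht0 hc).le
  calc ENNReal.ofReal ((1 - t / f x₀) ^ finrank ℝ E) * μ s
      = μ (AffineMap.homothety x₀ (1 - t / f x₀) '' s) := by
        rw [Measure.addHaar_image_homothety, abs_of_nonneg (pow_nonneg hr0 _)]
    _ ≤ μ {x ∈ s | t ≤ f x} := by
        refine measure_mono ((hf.homothety_image_subset hf0 hx₀ hr0 hr1).trans ?_)
        simp only [sub_sub_cancel, div_mul_cancel₀ t hc.ne']
        rfl

theorem ConcaveOn.div_mul_measure_le_lintegral (hf : ConcaveOn ℝ s f)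
    (hf0 : ∀ x ∈ s, 0 ≤ f x) (hx₀ : x₀ ∈ s) (hs : MeasurableSet s)
    (hfm : AEMeasurable f (μ.restrict s)) :
    ENNReal.ofReal (f x₀ / (finrank ℝ E + 1)) * μ s ≤ ∫⁻ x in s, ENNReal.ofReal (f x) ∂μ := by
  set c := f x₀
  set n := finrank ℝ E
  rcases (hf0 x₀ hx₀).eq_or_lt with hc | hc
  · simp [c, ← hc]
  have hprofile_cont : Continuous fun t : ℝ => (1 - t / c) ^ n := by fun_prop
  have hprofile : ENNReal.ofReal (c / (n + 1))
      = ∫⁻ t in Ioc 0 c, ENNReal.ofReal ((1 - t / c) ^ n) := by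
    rw [← integral_one_sub_div_pow, intervalIntegral.integral_of_le hc.le,
      ofReal_integral_eq_lintegral_ofReal]
    · exact hprofile_cont.integrableOn_Icc.mono_set Ioc_subset_Icc_self
    · refine (ae_restrict_iff' measurableSet_Ioc).2 (.of_forall fun t ht => pow_nonneg ?_ n)
      exact sub_nonneg.2 (div_le_one_of_le₀ ht.2 hc.le)
  rw [lintegral_eq_lintegral_meas_le _ ((ae_restrict_iff' hs).2 (.of_forall hf0)) hfm,
    hprofile, ← lintegral_mul_const _ (by fun_prop)]
  calc ∫⁻ t in Ioc 0 c, ENNReal.ofReal ((1 - t / c) ^ n) * μ s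
      ≤ ∫⁻ t in Ioc 0 c, μ.restrict s {x | t ≤ f x} := by
        refine setLIntegral_mono' measurableSet_Ioc fun t ht => ?_
        refine (hf.pow_mul_measure_le_measure_superlevel μ hf0 hx₀ ht.1 ht.2).trans ?_
        exact (measure_mono (inter_comm s _).le).trans (Measure.le_restrict_apply _ _)
    _ ≤ ∫⁻ t in Ioi 0, μ.restrict s {x | t ≤ f x} := lintegral_mono_set Ioc_subset_Ioi_self

theorem ConcaveOn.mul_measureReal_div_le_setIntegral (hf : ConcaveOn ℝ s f)
    (hf0 : ∀ x ∈ s, 0 ≤ f x) (hx₀ : x₀ ∈ s) (hs : MeasurableSet s) (hfi : IntegrableOn f s μ) :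
    f x₀ * μ.real s / (finrank ℝ E + 1) ≤ ∫ x in s, f x ∂μ := by
  have hf0' : 0 ≤ᵐ[μ.restrict s] f := (ae_restrict_iff' hs).2 (.of_forall hf0)
  rw [← ENNReal.ofReal_le_ofReal_iff (integral_nonneg_of_ae hf0'),
    ofReal_integral_eq_lintegral_ofReal hfi hf0', mul_div_right_comm,
    ENNReal.ofReal_mul (div_nonneg (hf0 x₀ hx₀) (by positivity))]
  calc ENNReal.ofReal (f x₀ / (finrank ℝ E + 1)) * ENNReal.ofReal (μ.real s)
      ≤ ENNReal.ofReal (f x₀ / (finrank ℝ E + 1)) * μ s := by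
        gcongr
        exact ENNReal.ofReal_toReal_le
    _ ≤ _ := hf.div_mul_measure_le_lintegral μ hf0 hx₀ hs hfi.aemeasurable

end Haar

theorem sq_setIntegral_le_measureReal_mul_setIntegral_sq {α : Type*} [MeasurableSpace α]
    {μ : Measure α} {s : Set α} {f : α → ℝ} (hs0 : μ s ≠ 0) (hs : μ s ≠ ⊤)
    (hf : IntegrableOn f s μ) (hf2 : IntegrableOn (fun x => f x ^ 2) s μ) :
    (∫ x in s, f x ∂μ) ^ 2 ≤ μ.real s * ∫ x in s, f x ^ 2 ∂μ := by
  have hV : 0 < μ.real s := ENNReal.toReal_pos hs0 hs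
  have jensen := (even_two.convexOn_pow (𝕜 := ℝ)).map_set_average_le (continuous_pow 2).continuousOn
    isClosed_univ hs0 hs (.of_forall fun _ => mem_univ _) hf hf2
  simp only [setAverage_eq, smul_eq_mul] at jensen
  calc (∫ x in s, f x ∂μ) ^ 2 = μ.real s ^ 2 * ((μ.real s)⁻¹ * ∫ x in s, f x ∂μ) ^ 2 := by
        field_simp
    _ ≤ μ.real s ^ 2 * ((μ.real s)⁻¹ * ∫ x in s, f x ^ 2 ∂μ) := by gcongr
    _ = μ.real s * ∫ x in s, f x ^ 2 ∂μ := by field_simp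

theorem stmt5_general (d : ℕ)
    (Ω : Set (EuclideanSpace ℝ (Fin d)))
    (hΩo : IsOpen Ω) (hΩb : Bornology.IsBounded Ω)
    (u : EuclideanSpace ℝ (Fin d) → ℝ)
    (hpos : ∀ x ∈ Ω, 0 ≤ u x)
    (hconc : ConcaveOn ℝ Ω (fun x => Real.sqrt (u x)))
    (M : ℝ) (hMpos : 0 < M)
    (x₀ : EuclideanSpace ℝ (Fin d)) (hx₀ : x₀ ∈ Ω) (hux₀ : u x₀ = M)
    (hint : IntegrableOn u Ω volume)
    (hints : IntegrableOn (fun x => Real.sqrt (u x)) Ω volume) :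
    Real.sqrt M * (volume Ω).toReal / (d + 1) ≤ (∫ x in Ω, Real.sqrt (u x)) ∧
    (1 : ℝ) / ((d + 1) ^ 2) ≤ (∫ x in Ω, u x) / (M * (volume Ω).toReal) := by
  have hΩm : MeasurableSet Ω := hΩo.measurableSet
  have hvol0 : volume Ω ≠ 0 := (hΩo.measure_pos volume ⟨x₀, hx₀⟩).ne'
  have hvol : volume Ω ≠ ⊤ := hΩb.measure_lt_top.ne
  have hV : 0 < volume.real Ω := ENNReal.toReal_pos hvol0 hvol
  have hsq : ∀ x ∈ Ω, Real.sqrt (u x) ^ 2 = u x := fun x hx => Real.sq_sqrt (hpos x hx)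
  have first : Real.sqrt M * volume.real Ω / (d + 1) ≤ ∫ x in Ω, Real.sqrt (u x) := by
    simpa only [hux₀, finrank_euclideanSpace_fin] using
      hconc.mul_measureReal_div_le_setIntegral volume (fun x _ => Real.sqrt_nonneg _) hx₀ hΩm hints
  have cauchySchwarz := sq_setIntegral_le_measureReal_mul_setIntegral_sq hvol0 hvol hints
    (hint.congr_fun (fun x hx => (hsq x hx).symm) hΩm)
  rw [setIntegral_congr_fun hΩm hsq] at cauchySchwarz
  have hsquared := (pow_le_pow_left₀ (by positivity) first 2).trans cauchySchwarz
  rw [div_pow, mul_pow, Real.sq_sqrt hMpos.le] at hsquared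
  refine ⟨first, ?_⟩
  rw [le_div_iff₀ (by positivity)]
  calc 1 / (d + 1) ^ 2 * (M * volume.real Ω)
      = M * volume.real Ω ^ 2 / (d + 1) ^ 2 / volume.real Ω := by field_simp
    _ ≤ volume.real Ω * (∫ x in Ω, u x) / volume.real Ω := by gcongr
    _ = ∫ x in Ω, u x := by field_simp

/-- For a bounded convex open set `Ω` whose torsion function `u` has concave square
root, one has `∫_Ω √u ≥ √(M(Ω)) |Ω| / (d+1)` and consequently
`T(Ω)/(M(Ω)|Ω|) ≥ 1/(d+1)²`. -/
theorem stmt5 (d : ℕ) (hd : 1 ≤ d)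
    (Ω : Set (EuclideanSpace ℝ (Fin d)))
    (hΩo : IsOpen Ω) (hΩb : Bornology.IsBounded Ω) (hne : Ω.Nonempty)
    (hconv : Convex ℝ Ω)
    (u : EuclideanSpace ℝ (Fin d) → ℝ)
    (hsmooth : ContDiffOn ℝ 2 u Ω)
    (hlap : ∀ x ∈ Ω, lap u x = -1)
    (hcont : ContinuousOn u (closure Ω))
    (hbdry : Set.EqOn u 0 (frontier Ω))
    (hpos : ∀ x ∈ Ω, 0 ≤ u x)
    (hconc : ConcaveOn ℝ Ω (fun x => Real.sqrt (u x)))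
    (M : ℝ) (hM : M = sSup (u '' Ω)) (hMpos : 0 < M)
    (x₀ : EuclideanSpace ℝ (Fin d)) (hx₀ : x₀ ∈ Ω) (hux₀ : u x₀ = M)
    (hint : IntegrableOn u Ω volume)
    (hints : IntegrableOn (fun x => Real.sqrt (u x)) Ω volume) :
    Real.sqrt M * (volume Ω).toReal / (d + 1) ≤ (∫ x in Ω, Real.sqrt (u x)) ∧
    (1 : ℝ) / ((d + 1) ^ 2) ≤ (∫ x in Ω, u x) / (M * (volume Ω).toReal) :=
  stmt5_general d Ω hΩo hΩb u hpos hconc M hMpos x₀ hx₀ hux₀ hint hints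
end

section
/- For the rectangles Ω_n = (-n, n) × (0, 1) ⊂ ℝ², one has T(Ω_n) ≥ n/6 - 4 and hence, using M(Ω_n) ≤ 1/8 and |Ω_n| = 2n, the estimate F(Ω_n) = T(Ω_n)/(M(Ω_n)|Ω_n|) ≥ 2/3 - 16/n. In particular F(Ω_n) → 2/3, so the bound F ≤ 2/3 on convex sets is sharp. -/
/-!
The function `φ(x, y) = y(1 - y)/2 - cosh x cos(y - 1/2) / cosh n` satisfies `-Δφ = 1` and is
nonpositive on `∂Ω_n`: on the long sides the first term vanishes, and on the short sides the
harmonic correction equals `cos(y - 1/2) ≥ 7/8 > 1/8 ≥ y(1 - y)/2`. Hence `u - φ` is harmonic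
and nonnegative on the boundary, so `φ ≤ u` by the weak maximum principle (proved by perturbing
with `-ε‖x‖²`, which makes the Laplacian strictly negative so that no interior minimum can
occur). Integrating, `T(Ω_n) ≥ ∫ φ = n/6 - 4 tanh n sin(1/2) ≥ n/6 - 2`. The bound on `F`
follows from `M ≤ 1/8`, and together with `F ≤ 2/3` it squeezes `F(Ω_n)` to `2/3`.
-/

open MeasureTheory

open Real Filter Set InnerProductSpace Topology Laplacian

theorem IsLocalMin.fderiv_fderiv_apply_nonneg {E : Type*} [NormedAddCommGroup E]
    [NormedSpace ℝ E] {v : E → ℝ} {x : E} (hv : ContDiffAt ℝ 2 v x) (hmin : IsLocalMin v x)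
    (e : E) : 0 ≤ fderiv ℝ (fun y => fderiv ℝ v y e) x e := by
  set g : ℝ → ℝ := fun t => v (x + t • e)
  have hline : ∀ t : ℝ, HasDerivAt (fun t : ℝ => x + t • e) e t := fun t => by
    simpa using ((hasDerivAt_id t).smul_const e).const_add x
  have hline0 : Tendsto (fun t : ℝ => x + t • e) (𝓝 0) (𝓝 x) := by
    simpa using (hline 0).continuousAt.tendsto
  have hdiff : ∀ᶠ y in 𝓝 x, DifferentiableAt ℝ v y :=
    (hv.eventually (by simp)).mono fun y hy => hy.differentiableAt (by simp)
  have hdg : deriv g =ᶠ[𝓝 0] fun t => fderiv ℝ v (x + t • e) e := by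
    filter_upwards [hline0.eventually hdiff] with t ht
    exact (ht.hasFDerivAt.comp_hasDerivAt t (hline t)).deriv
  have hd2 : HasFDerivAt (fun y => fderiv ℝ v y e)
      (fderiv ℝ (fun y => fderiv ℝ v y e) x) x :=
    ((hv.fderiv_right (m := 1) le_rfl).differentiableAt one_ne_zero).clm_apply
      (differentiableAt_const e) |>.hasFDerivAt
  have hg'' : deriv (deriv g) 0 = fderiv ℝ (fun y => fderiv ℝ v y e) x e := by
    rw [hdg.deriv_eq]
    exact (hd2.comp_hasDerivAt_of_eq 0 (hline 0) (by simp)).deriv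
  have hgmin : IsLocalMin g 0 := by
    simpa [g, IsLocalMin, IsMinFilter] using hline0.eventually hmin
  -- A negative second derivative would make `0` also a local maximum of `g`, so `g` would be
  -- locally constant and its second derivative would vanish.
  by_contra hneg
  have hgmax : IsLocalMax g 0 := isLocalMax_of_deriv_deriv_neg (by linarith)
    hgmin.deriv_eq_zero (hv.continuousAt.comp_of_eq (hline 0).continuousAt (by simp))
  have hconst : g =ᶠ[𝓝 0] fun _ => g 0 :=
    (hgmin.and hgmax).mono fun t ht => le_antisymm ht.2 ht.1
  have hg''0 : deriv (deriv g) 0 = 0 := by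
    rw [(hconst.deriv).deriv_eq]
    simp
  linarith

theorem fderiv_fderiv_apply_of_contDiffAt {E : Type*} [NormedAddCommGroup E] [NormedSpace ℝ E]
    {v : E → ℝ} {x : E} (hv : ContDiffAt ℝ 2 v x) (e e' : E) :
    fderiv ℝ (fun y => fderiv ℝ v y e) x e' = fderiv ℝ (fderiv ℝ v) x e' e := by
  rw [fderiv_clm_apply ((hv.fderiv_right (m := 1) le_rfl).differentiableAt one_ne_zero)
    (differentiableAt_const e)]
  simp

section lap

variable {d : ℕ} {f g : EuclideanSpace ℝ (Fin d) → ℝ} {x : EuclideanSpace ℝ (Fin d)}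

theorem lap_eq_laplacian (hf : ContDiffAt ℝ 2 f x) : lap f x = Δ f x := by
  rw [laplacian_eq_iteratedFDeriv_orthonormalBasis f (EuclideanSpace.basisFun (Fin d) ℝ), lap]
  congr 1 with i
  simp [iteratedFDeriv_two_apply, fderiv_fderiv_apply_of_contDiffAt hf]

theorem lap_sub (hf : ContDiffAt ℝ 2 f x) (hg : ContDiffAt ℝ 2 g x) :
    lap (f - g) x = lap f x - lap g x := by
  rw [lap_eq_laplacian hf, lap_eq_laplacian hg, lap_eq_laplacian (f := f - g) (hf.sub hg),
    hf.laplacian_sub hg]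

theorem lap_const_mul_norm_sq (c : ℝ) : lap (fun p => c * ‖p‖ ^ 2) x = 2 * d * c := by
  have hfd : ∀ (y e : EuclideanSpace ℝ (Fin d)),
      fderiv ℝ (fun p => c * ‖p‖ ^ 2) y e = 2 * c * inner ℝ y e := by
    intro y e
    rw [((hasStrictFDerivAt_norm_sq y).hasFDerivAt.const_mul c).fderiv]
    simp
    ring
  have hfd2 : ∀ e : EuclideanSpace ℝ (Fin d),
      fderiv ℝ (fun y => 2 * c * inner ℝ y e) x e = 2 * c * ‖e‖ ^ 2 := by
    intro e
    have h : HasFDerivAt (fun y => 2 * c * inner ℝ y e) ((2 * c) • (innerSL ℝ e)) x := by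
      simpa [real_inner_comm] using ((innerSL ℝ e).hasFDerivAt (x := x)).const_mul (2 * c)
    rw [h.fderiv]
    simp
  simp only [lap, hfd, hfd2]
  simp
  ring

theorem IsLocalMin.lap_nonneg (hf : ContDiffAt ℝ 2 f x) (hmin : IsLocalMin f x) : 0 ≤ lap f x :=
  Finset.sum_nonneg fun _ _ => hmin.fderiv_fderiv_apply_nonneg hf _

variable {Ω : Set (EuclideanSpace ℝ (Fin d))}

theorem IsOpen.exists_mem_frontier_isMinOn_of_lap_neg (hΩ : IsOpen Ω)
    (hb : Bornology.IsBounded Ω) (hne : Ω.Nonempty) (hf : ContDiffOn ℝ 2 f Ω)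
    (hlap : ∀ x ∈ Ω, lap f x < 0) (hc : ContinuousOn f (closure Ω)) :
    ∃ x₀ ∈ frontier Ω, IsMinOn f (closure Ω) x₀ := by
  obtain ⟨x₀, hx₀, hmin⟩ := hb.isCompact_closure.exists_isMinOn hne.closure hc
  refine ⟨x₀, ?_, hmin⟩
  rw [hΩ.frontier_eq]
  refine ⟨hx₀, fun hx₀Ω => ?_⟩
  have hloc : IsLocalMin f x₀ :=
    hmin.isLocalMin (mem_of_superset (hΩ.mem_nhds hx₀Ω) subset_closure)
  exact (hlap x₀ hx₀Ω).not_ge (hloc.lap_nonneg (hf.contDiffAt (hΩ.mem_nhds hx₀Ω)))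

theorem IsOpen.nonneg_of_lap_nonpos [NeZero d] (hΩ : IsOpen Ω) (hb : Bornology.IsBounded Ω)
    (hf : ContDiffOn ℝ 2 f Ω) (hlap : ∀ x ∈ Ω, lap f x ≤ 0)
    (hc : ContinuousOn f (closure Ω))
    (hfr : ∀ x ∈ frontier Ω, 0 ≤ f x) : ∀ x ∈ Ω, 0 ≤ f x := by
  obtain ⟨R, hR⟩ := hb.subset_closedBall 0
  have hRcl : closure Ω ⊆ Metric.closedBall 0 R := closure_minimal hR Metric.isClosed_closedBall
  intro x hx
  refine le_of_forall_pos_le_add fun δ hδ => ?_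
  set ε := δ / (R ^ 2 + 1)
  have hε : 0 < ε := by positivity
  set q : EuclideanSpace ℝ (Fin d) → ℝ := fun p => ε * ‖p‖ ^ 2
  have hq : ContDiff ℝ 2 q := contDiff_const.mul (contDiff_norm_sq ℝ)
  have hlapq : ∀ y ∈ Ω, lap (f - q) y < 0 := by
    intro y hy
    rw [lap_sub (hf.contDiffAt (hΩ.mem_nhds hy)) hq.contDiffAt, lap_const_mul_norm_sq]
    have : (1 : ℝ) ≤ d := by exact_mod_cast Nat.one_le_iff_ne_zero.mpr (NeZero.ne d)
    nlinarith [hlap y hy]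
  obtain ⟨x₀, hx₀, hmin⟩ := hΩ.exists_mem_frontier_isMinOn_of_lap_neg hb ⟨x, hx⟩
    (hf.sub hq.contDiffOn) hlapq (hc.sub hq.continuous.continuousOn)
  have hmin_x : f x₀ - q x₀ ≤ f x - q x := hmin (subset_closure hx)
  have hx₀R : ‖x₀‖ ≤ R := by simpa using hRcl (frontier_subset_closure hx₀)
  have hqx₀ : q x₀ ≤ ε * R ^ 2 := by simp only [q]; gcongr
  have hεR : ε * R ^ 2 ≤ δ := by
    rw [div_mul_eq_mul_div, div_le_iff₀ (by positivity)]
    nlinarith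
  have : 0 ≤ q x := by positivity
  linarith [hfr x₀ hx₀]

end lap

local notation "ℝ²" => EuclideanSpace ℝ (Fin 2)

section rect

def openRect (a b c d : ℝ) : Set ℝ² := {p | a < p 0 ∧ p 0 < b ∧ c < p 1 ∧ p 1 < d}

def closedRect (a b c d : ℝ) : Set ℝ² :=
  {p | a ≤ p 0 ∧ p 0 ≤ b ∧ c ≤ p 1 ∧ p 1 ≤ d}

variable {a b c d : ℝ}

theorem isOpen_openRect : IsOpen (openRect a b c d) := by
  have h0 : Continuous fun p : ℝ² => p 0 := (EuclideanSpace.proj (0 : Fin 2)).continuous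
  have h1 : Continuous fun p : ℝ² => p 1 := (EuclideanSpace.proj (1 : Fin 2)).continuous
  exact (isOpen_lt continuous_const h0).inter ((isOpen_lt h0 continuous_const).inter
    ((isOpen_lt continuous_const h1).inter (isOpen_lt h1 continuous_const)))

theorem isCompact_closedRect : IsCompact (closedRect a b c d) := by
  have : closedRect a b c d = EuclideanSpace.equiv (Fin 2) ℝ ⁻¹' Icc ![a, c] ![b, d] := by
    ext p
    simp [closedRect, Pi.le_def, Fin.forall_fin_two]
    tauto
  rw [this]
  exact (EuclideanSpace.equiv (Fin 2) ℝ).toHomeomorph.isCompact_preimage.mpr isCompact_Icc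

theorem openRect_subset_closedRect : openRect a b c d ⊆ closedRect a b c d :=
  fun _ ⟨h₁, h₂, h₃, h₄⟩ => ⟨h₁.le, h₂.le, h₃.le, h₄.le⟩

theorem closure_openRect_subset : closure (openRect a b c d) ⊆ closedRect a b c d :=
  closure_minimal openRect_subset_closedRect isCompact_closedRect.isClosed

theorem isBounded_openRect : Bornology.IsBounded (openRect a b c d) :=
  isCompact_closedRect.isBounded.subset openRect_subset_closedRect

theorem mem_frontier_openRect {x : ℝ²} (hx : x ∈ frontier (openRect a b c d)) :
    x ∈ closedRect a b c d ∧ (x 0 = a ∨ x 0 = b ∨ x 1 = c ∨ x 1 = d) := by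
  rw [isOpen_openRect.frontier_eq] at hx
  obtain ⟨hcl, hnot⟩ := hx
  obtain ⟨h₁, h₂, h₃, h₄⟩ := closure_openRect_subset hcl
  refine ⟨⟨h₁, h₂, h₃, h₄⟩, ?_⟩
  by_contra! hne
  exact hnot ⟨h₁.lt_of_ne hne.1.symm, h₂.lt_of_ne hne.2.1, h₃.lt_of_ne hne.2.2.1.symm,
    h₄.lt_of_ne hne.2.2.2⟩

theorem ContinuousOn.integrableOn_openRect {f : ℝ² → ℝ}
    (hf : ContinuousOn f (closedRect a b c d)) : IntegrableOn f (openRect a b c d) :=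
  (hf.integrableOn_compact isCompact_closedRect).mono_set openRect_subset_closedRect

theorem setIntegral_openRect_mul (A B : ℝ → ℝ) :
    ∫ x in openRect a b c d, A (x 0) * B (x 1) =
      (∫ t in Ioo a b, A t) * ∫ t in Ioo c d, B t := by
  have hpre : (MeasurableEquiv.toLp 2 (Fin 2 → ℝ)).symm ⁻¹'
      (MeasurableEquiv.piFinTwo fun _ => ℝ) ⁻¹' (Ioo a b ×ˢ Ioo c d) = openRect a b c d := by
    ext p
    simp [openRect, MeasurableEquiv.piFinTwo_apply, and_assoc]
  calc ∫ x in openRect a b c d, A (x 0) * B (x 1)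
      = ∫ y in (MeasurableEquiv.piFinTwo fun _ => ℝ) ⁻¹' (Ioo a b ×ˢ Ioo c d),
          A (y 0) * B (y 1) := by
        rw [← hpre]
        exact (EuclideanSpace.volume_preserving_symm_measurableEquiv_toLp (Fin 2))
          |>.setIntegral_preimage_emb
            (MeasurableEquiv.toLp 2 (Fin 2 → ℝ)).symm.measurableEmbedding
          (fun y : Fin 2 → ℝ => A (y 0) * B (y 1)) _
    _ = ∫ z in Ioo a b ×ˢ Ioo c d, A z.1 * B z.2 :=
        (volume_preserving_piFinTwo fun _ => ℝ).setIntegral_preimage_emb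
          (MeasurableEquiv.piFinTwo _).measurableEmbedding (fun z => A z.1 * B z.2) _
    _ = _ := setIntegral_prod_mul A B _ _

end rect

section separable

variable {A B A' B' A'' B'' : ℝ → ℝ}

theorem fderiv_mul_coord_apply (hA : ∀ t, HasDerivAt A (A' t) t)
    (hB : ∀ t, HasDerivAt B (B' t) t) (y e : ℝ²) :
    fderiv ℝ (fun p : ℝ² => A (p 0) * B (p 1)) y e =
      A' (y 0) * B (y 1) * e 0 + A (y 0) * B' (y 1) * e 1 := by
  have h0 : HasFDerivAt (fun p : ℝ² => A (p 0)) _ y :=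
    (hA (y 0)).comp_hasFDerivAt y (EuclideanSpace.proj (𝕜 := ℝ) (0 : Fin 2)).hasFDerivAt
  have h1 : HasFDerivAt (fun p : ℝ² => B (p 1)) _ y :=
    (hB (y 1)).comp_hasFDerivAt y (EuclideanSpace.proj (𝕜 := ℝ) (1 : Fin 2)).hasFDerivAt
  rw [(h0.fun_mul h1).fderiv]
  simp
  ring

theorem lap_mul_coord (hA : ∀ t, HasDerivAt A (A' t) t) (hA' : ∀ t, HasDerivAt A' (A'' t) t)
    (hB : ∀ t, HasDerivAt B (B' t) t) (hB' : ∀ t, HasDerivAt B' (B'' t) t) (x : ℝ²) :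
    lap (fun p : ℝ² => A (p 0) * B (p 1)) x = A'' (x 0) * B (x 1) + A (x 0) * B'' (x 1) := by
  simp only [lap, Fin.sum_univ_two, fderiv_mul_coord_apply hA hB]
  simp [fderiv_mul_coord_apply hA' hB, fderiv_mul_coord_apply hA hB']

end separable

section barrier

variable {r : ℝ}

noncomputable def torsionBarrier (r : ℝ) (p : ℝ²) : ℝ :=
  p 1 * (1 - p 1) / 2 - cosh (p 0) / cosh r * cos (p 1 - 1 / 2)

theorem contDiff_torsionBarrier (r : ℝ) : ContDiff ℝ 2 (torsionBarrier r) := by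
  unfold torsionBarrier
  fun_prop

theorem lap_torsionBarrier (x : ℝ²) : lap (torsionBarrier r) x = -1 := by
  have hB₁ (t : ℝ) : HasDerivAt (fun t => t * (1 - t) / 2) (1 / 2 - t) t := by
    refine (((hasDerivAt_id t).mul ((hasDerivAt_id t).const_sub 1)).div_const 2).congr_deriv ?_
    simp
    ring
  have hB₁' (t : ℝ) : HasDerivAt (fun t => 1 / 2 - t) (-1) t :=
    (hasDerivAt_id t).const_sub (1 / 2)
  have hA₂ (t : ℝ) : HasDerivAt (fun t => cosh t / cosh r) (sinh t / cosh r) t :=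
    (hasDerivAt_cosh t).div_const _
  have hA₂' (t : ℝ) : HasDerivAt (fun t => sinh t / cosh r) (cosh t / cosh r) t :=
    (hasDerivAt_sinh t).div_const _
  have hB₂ (t : ℝ) : HasDerivAt (fun t => cos (t - 1 / 2)) (-sin (t - 1 / 2)) t :=
    ((hasDerivAt_id t).sub_const (1 / 2)).cos.congr_deriv (by simp)
  have hB₂' (t : ℝ) : HasDerivAt (fun t => -sin (t - 1 / 2)) (-cos (t - 1 / 2)) t :=
    ((hasDerivAt_id t).sub_const (1 / 2)).sin.neg.congr_deriv (by simp)
  have h₁ := lap_mul_coord (A := fun _ => 1) (A' := fun _ => 0) (A'' := fun _ => 0)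
    (fun t => hasDerivAt_const t 1) (fun t => hasDerivAt_const t 0) hB₁ hB₁' x
  have h₂ := lap_mul_coord hA₂ hA₂' hB₂ hB₂' x
  have hsplit : torsionBarrier r = (fun p : ℝ² => 1 * (p 1 * (1 - p 1) / 2)) -
      fun p : ℝ² => cosh (p 0) / cosh r * cos (p 1 - 1 / 2) := by
    ext p
    simp [torsionBarrier]
  rw [hsplit, lap_sub (by fun_prop) (by fun_prop), h₁, h₂]
  ring

theorem torsionBarrier_nonpos_of_mem_frontier {x : ℝ²}
    (hx : x ∈ frontier (openRect (-r) r 0 1)) : torsionBarrier r x ≤ 0 := by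
  obtain ⟨⟨h₁, h₂, h₃, h₄⟩, hside⟩ := mem_frontier_openRect hx
  have hcos : 7 / 8 ≤ cos (x 1 - 1 / 2) := by
    nlinarith [one_sub_sq_div_two_le_cos (x := x 1 - 1 / 2)]
  have hcosh : 0 < cosh (x 0) / cosh r := div_pos (cosh_pos _) (cosh_pos _)
  unfold torsionBarrier
  rcases hside with h | h | h | h
  · rw [h, cosh_neg, div_self (cosh_pos r).ne']
    nlinarith
  · rw [h, div_self (cosh_pos r).ne']
    nlinarith
  all_goals
    rw [h] at hcos ⊢
    nlinarith

theorem torsionBarrier_le {u : ℝ² → ℝ} (hu : ContDiffOn ℝ 2 u (openRect (-r) r 0 1))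
    (hlap : ∀ x ∈ openRect (-r) r 0 1, lap u x ≤ -1)
    (hc : ContinuousOn u (closure (openRect (-r) r 0 1)))
    (hfr : ∀ x ∈ frontier (openRect (-r) r 0 1), 0 ≤ u x) :
    ∀ x ∈ openRect (-r) r 0 1, torsionBarrier r x ≤ u x := by
  have hφ := contDiff_torsionBarrier r
  have key := isOpen_openRect.nonneg_of_lap_nonpos (f := u - torsionBarrier r) isBounded_openRect
    (hu.sub hφ.contDiffOn) ?_ (hc.sub hφ.continuous.continuousOn) ?_
  · exact fun x hx => sub_nonneg.mp (key x hx)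
  · intro x hx
    rw [lap_sub (hu.contDiffAt (isOpen_openRect.mem_nhds hx)) hφ.contDiffAt, lap_torsionBarrier]
    linarith [hlap x hx]
  · intro x hx
    simp only [Pi.sub_apply, sub_nonneg]
    exact (torsionBarrier_nonpos_of_mem_frontier hx).trans (hfr x hx)

theorem setIntegral_torsionBarrier (hr : 0 ≤ r) :
    ∫ x in openRect (-r) r 0 1, torsionBarrier r x = r / 6 - 4 * tanh r * sin (1 / 2) := by
  have hIoo {a b : ℝ} (hab : a ≤ b) (f : ℝ → ℝ) :
      ∫ t in Ioo a b, f t = ∫ t in a..b, f t := by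
    rw [intervalIntegral.integral_of_le hab, integral_Ioc_eq_integral_Ioo]
  have hint₁ : IntegrableOn (fun p : ℝ² => 1 * (p 1 * (1 - p 1) / 2))
      (openRect (-r) r 0 1) :=
    ContinuousOn.integrableOn_openRect (by fun_prop)
  have hint₂ : IntegrableOn (fun p : ℝ² => cosh (p 0) / cosh r * cos (p 1 - 1 / 2))
      (openRect (-r) r 0 1) :=
    ContinuousOn.integrableOn_openRect (by fun_prop)
  have hquad : ∫ t in (0 : ℝ)..1, t * (1 - t) / 2 = 1 / 12 := by
    have : (fun t : ℝ => t * (1 - t) / 2) = fun t => t / 2 - t ^ 2 / 2 := by ext; ring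
    rw [this, intervalIntegral.integral_sub (Continuous.intervalIntegrable (by fun_prop) _ _)
      (Continuous.intervalIntegrable (by fun_prop) _ _), intervalIntegral.integral_div,
      intervalIntegral.integral_div]
    norm_num
  have hcosh : ∫ t in (-r)..r, cosh t / cosh r = 2 * tanh r := by
    rw [intervalIntegral.integral_div, intervalIntegral.integral_deriv_eq_sub'
      sinh (funext fun t => (hasDerivAt_sinh t).deriv) (fun _ _ => differentiableAt_sinh)
      (by fun_prop), sinh_neg, tanh_eq_sinh_div_cosh]
    ring
  have hcos : ∫ t in (0 : ℝ)..1, cos (t - 1 / 2) = 2 * sin (1 / 2) := by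
    rw [intervalIntegral.integral_comp_sub_right (fun t => cos t), integral_cos]
    norm_num [sin_neg]
    ring
  calc ∫ x in openRect (-r) r 0 1, torsionBarrier r x
      = (∫ x in openRect (-r) r 0 1, 1 * (x 1 * (1 - x 1) / 2)) -
          ∫ x in openRect (-r) r 0 1, cosh (x 0) / cosh r * cos (x 1 - 1 / 2) := by
        rw [← integral_sub hint₁ hint₂]
        simp [torsionBarrier]
    _ = (∫ t in Ioo (-r) r, (1 : ℝ)) * (∫ t in Ioo 0 1, t * (1 - t) / 2) -
          (∫ t in Ioo (-r) r, cosh t / cosh r) * ∫ t in Ioo 0 1, cos (t - 1 / 2) := by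
        rw [setIntegral_openRect_mul (fun _ => 1) (fun t => t * (1 - t) / 2),
          setIntegral_openRect_mul (fun t => cosh t / cosh r) (fun t => cos (t - 1 / 2))]
    _ = r / 6 - 4 * tanh r * sin (1 / 2) := by
        rw [hIoo (by linarith) _, hIoo zero_le_one _, hIoo (by linarith) _, hIoo zero_le_one _,
          hquad, hcosh, hcos]
        simp
        ring

end barrier

theorem sub_two_le_setIntegral_openRect {r : ℝ} (hr : 0 ≤ r) {u : ℝ² → ℝ}
    (hu : ContDiffOn ℝ 2 u (openRect (-r) r 0 1))
    (hlap : ∀ x ∈ openRect (-r) r 0 1, lap u x ≤ -1)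
    (hc : ContinuousOn u (closure (openRect (-r) r 0 1)))
    (hfr : ∀ x ∈ frontier (openRect (-r) r 0 1), 0 ≤ u x)
    (hint : IntegrableOn u (openRect (-r) r 0 1)) :
    r / 6 - 2 ≤ ∫ x in openRect (-r) r 0 1, u x := by
  have hsin₀ : 0 ≤ sin (1 / 2) :=
    sin_nonneg_of_nonneg_of_le_pi (by norm_num) (by linarith [pi_gt_three])
  have hsin₁ : sin (1 / 2) ≤ 1 / 2 := sin_le (by norm_num)
  calc r / 6 - 2 ≤ r / 6 - 4 * tanh r * sin (1 / 2) := by nlinarith [tanh_lt_one r]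
    _ = ∫ x in openRect (-r) r 0 1, torsionBarrier r x := (setIntegral_torsionBarrier hr).symm
    _ ≤ ∫ x in openRect (-r) r 0 1, u x :=
        setIntegral_mono_on
          ((contDiff_torsionBarrier r).continuous.continuousOn.integrableOn_openRect) hint
          isOpen_openRect.measurableSet (torsionBarrier_le hu hlap hc hfr)

theorem two_thirds_sub_le_div {n T M : ℝ} (hn : 0 < n) (hM₀ : 0 < M) (hM₈ : M ≤ 1 / 8)
    (hT₀ : 0 ≤ T) (hT : n / 6 - 4 ≤ T) : 2 / 3 - 16 / n ≤ T / (M * (2 * n)) := by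
  rw [le_div_iff₀ (by positivity)]
  have hid : (2 / 3 - 16 / n) * (M * (2 * n)) = M * (4 * n / 3 - 32) := by
    field_simp
    ring
  rw [hid]
  rcases le_or_gt (4 * n / 3 - 32) 0 with h | h <;> nlinarith

theorem stmt8_general (Ω : ℕ → Set (EuclideanSpace ℝ (Fin 2)))
    (hΩ : ∀ n, Ω n = {p : EuclideanSpace ℝ (Fin 2) |
      -(n : ℝ) < p 0 ∧ p 0 < n ∧ 0 < p 1 ∧ p 1 < 1})
    (u : ℕ → EuclideanSpace ℝ (Fin 2) → ℝ)
    (hsmooth : ∀ n, ContDiffOn ℝ 2 (u n) (Ω n))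
    (hlap : ∀ n, ∀ x ∈ Ω n, lap (u n) x = -1)
    (hcont : ∀ n, ContinuousOn (u n) (closure (Ω n)))
    (hbdry : ∀ n, Set.EqOn (u n) 0 (frontier (Ω n)))
    (hpos : ∀ n, ∀ x ∈ Ω n, 0 ≤ u n x)
    (hintg : ∀ n, IntegrableOn (u n) (Ω n) volume)
    (T M F : ℕ → ℝ)
    (hT : ∀ n, T n = ∫ x in Ω n, u n x)
    (hF : ∀ n, F n = T n / (M n * (2 * n)))
    (hM8 : ∀ n, 1 ≤ n → M n ≤ 1 / 8)
    (hM0 : ∀ n, 1 ≤ n → 0 < M n)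
    (hub : ∀ n, 1 ≤ n → F n ≤ 2 / 3) :
    (∀ n : ℕ, 1 ≤ n → (n : ℝ) / 6 - 4 ≤ T n) ∧
    (∀ n : ℕ, 1 ≤ n → 2 / 3 - 16 / (n : ℝ) ≤ F n) ∧
    Filter.Tendsto F Filter.atTop (nhds (2 / 3)) := by
  have hΩ' (n : ℕ) : Ω n = openRect (-n) n 0 1 := hΩ n
  have hT_ge (n : ℕ) : (n : ℝ) / 6 - 4 ≤ T n := by
    have h := sub_two_le_setIntegral_openRect (u := u n) n.cast_nonneg (hΩ' n ▸ hsmooth n)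
      (hΩ' n ▸ fun x hx => (hlap n x hx).le) (hΩ' n ▸ hcont n)
      (hΩ' n ▸ fun x hx => (hbdry n hx).ge) (hΩ' n ▸ hintg n)
    rw [hT n, hΩ' n]
    linarith
  have hT_nonneg (n : ℕ) : 0 ≤ T n := by
    rw [hT n]
    exact setIntegral_nonneg (hΩ' n ▸ isOpen_openRect.measurableSet) (hpos n)
  have hF_ge (n : ℕ) (hn : 1 ≤ n) : 2 / 3 - 16 / (n : ℝ) ≤ F n :=
    hF n ▸ two_thirds_sub_le_div (by exact_mod_cast hn) (hM0 n hn) (hM8 n hn) (hT_nonneg n)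
      (hT_ge n)
  refine ⟨fun n _ => hT_ge n, hF_ge, ?_⟩
  have hlow : Tendsto (fun n : ℕ => 2 / 3 - 16 / (n : ℝ)) atTop (𝓝 (2 / 3)) := by
    simpa using tendsto_const_nhds.sub (tendsto_const_div_atTop_nhds_zero_nat (16 : ℝ))
  exact tendsto_of_tendsto_of_tendsto_of_le_of_le' hlow tendsto_const_nhds
    (eventually_atTop.mpr ⟨1, hF_ge⟩) (eventually_atTop.mpr ⟨1, hub⟩)

/-- For the rectangles `Ω_n = (-n,n) × (0,1) ⊆ ℝ²` with torsion functions `u_n`,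
one has `T(Ω_n) ≥ n/6 - 4`; hence, using `M(Ω_n) ≤ 1/8` and `|Ω_n| = 2n`, the ratio
`F(Ω_n) = T(Ω_n)/(M(Ω_n)·2n)` satisfies `F(Ω_n) ≥ 2/3 - 16/n`.  In particular,
since `F ≤ 2/3` on convex sets, `F(Ω_n) → 2/3`, so the bound `2/3` is sharp. -/
theorem stmt8 (Ω : ℕ → Set (EuclideanSpace ℝ (Fin 2)))
    (hΩ : ∀ n, Ω n = {p : EuclideanSpace ℝ (Fin 2) |
      -(n : ℝ) < p 0 ∧ p 0 < n ∧ 0 < p 1 ∧ p 1 < 1})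
    (u : ℕ → EuclideanSpace ℝ (Fin 2) → ℝ)
    (hsmooth : ∀ n, ContDiffOn ℝ 2 (u n) (Ω n))
    (hlap : ∀ n, ∀ x ∈ Ω n, lap (u n) x = -1)
    (hcont : ∀ n, ContinuousOn (u n) (closure (Ω n)))
    (hbdry : ∀ n, Set.EqOn (u n) 0 (frontier (Ω n)))
    (hpos : ∀ n, ∀ x ∈ Ω n, 0 ≤ u n x)
    (hintg : ∀ n, IntegrableOn (u n) (Ω n) volume)
    (T M F : ℕ → ℝ)
    (hT : ∀ n, T n = ∫ x in Ω n, u n x)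
    (hM : ∀ n, M n = sSup (u n '' Ω n))
    (hF : ∀ n, F n = T n / (M n * (2 * n)))
    (hM8 : ∀ n, 1 ≤ n → M n ≤ 1 / 8)
    (hM0 : ∀ n, 1 ≤ n → 0 < M n)
    (hub : ∀ n, 1 ≤ n → F n ≤ 2 / 3) :
    (∀ n : ℕ, 1 ≤ n → (n : ℝ) / 6 - 4 ≤ T n) ∧
    (∀ n : ℕ, 1 ≤ n → 2 / 3 - 16 / (n : ℝ) ≤ F n) ∧
    Filter.Tendsto F Filter.atTop (nhds (2 / 3)) :=
  stmt8_general Ω hΩ u hsmooth hlap hcont hbdry hpos hintg T M F hT hF hM8 hM0 hub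
end

section
/- With M(T) = 1/36 and λ₁(T) = 16π²/3 for the equilateral triangle T of side 1, one has G(T) = M(T)λ₁(T) = 4π²/27, and 4π²/27 > j₀² / 4 = G(𝔻), where j₀ ≈ 2.4048 is the first zero of the Bessel function J₀ and 𝔻 the unit disk. Thus the equilateral triangle gives a strictly larger value of G than the disk. -/
/-- With `M(T) = 1/36` and `λ₁(T) = 16π²/3` for the equilateral triangle of side 1,
one has `G(T) = M(T)λ₁(T) = 4π²/27`, and `4π²/27 > j₀²/4 = G(𝔻)`, where `j₀` is the
first zero of the Bessel function `J₀` (for which we use the rigorous bound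
`j₀ < 2.4049`): the equilateral triangle beats the disk. -/
theorem stmt16 (j₀ : ℝ) (hj₀pos : 0 < j₀) (hj₀ : j₀ < 2.4049) :
    (1 / 36 : ℝ) * (16 * Real.pi ^ 2 / 3) = 4 * Real.pi ^ 2 / 27 ∧
    j₀ ^ 2 / 4 < 4 * Real.pi ^ 2 / 27 := by
  refine ⟨by ring, ?_⟩
  calc j₀ ^ 2 / 4 < 2.4049 ^ 2 / 4 := by gcongr
    _ < 4 * 3.14 ^ 2 / 27 := by norm_num
    _ < 4 * Real.pi ^ 2 / 27 := by gcongr; exact Real.pi_gt_d2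
end
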